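/- arXiv:1403.1352 — 6 statements merged into one kernel-verified Lean document; each statement's English description precedes it below -/
import Mathlib

section
/- For every integer n ≥ 1 and every positive integer d there exists a nonzero polynomial Q in n real variables of total degree at most d such that every point x of the unit cube [0,1]^n satisfies dist(x, Z(Q)) ≤ 1/d, where Z(Q) = {x ∈ ℝ^n : Q(x) = 0}. In other words, the zero set of a degree-d polynomial can be (1/d)-dense in the unit cube, so the bound in the dense-zero-set theorem is sharp up to constants. -/
/-!
The union of the `d` hyperplanes `x₀ = k / d`, `0 ≤ k < d`, is the zero set of the product of
the linear forms `X₀ - k / d`, a polynomial of degree `d`, and every point of `[0,1]^n` lies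
within `1 / d` of one of them.
-/

open MvPolynomial

namespace MvPolynomial

variable {R σ : Type*} [CommRing R] [Nontrivial R]

theorem X_sub_C_ne_zero (i : σ) (c : R) : (X i - C c : MvPolynomial σ R) ≠ 0 := by
  intro h
  simpa using congrArg (eval fun _ => c + 1) h

theorem totalDegree_prod_X_sub_C_le {ι : Type*} (i : σ) (s : Finset ι) (a : ι → R) :
    (∏ k ∈ s, (X i - C (a k))).totalDegree ≤ s.card := by
  refine (totalDegree_finsetProd _ _).trans ?_
  refine (Finset.sum_le_card_nsmul _ _ 1 fun k _ => ?_).trans (by simp)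
  exact (totalDegree_sub_C_le _ _).trans (totalDegree_X _).le

end MvPolynomial

theorem exists_lt_abs_sub_div_le {t : ℝ} (ht : t ∈ Set.Icc (0 : ℝ) 1) {d : ℕ} (hd : 0 < d) :
    ∃ k < d, |t - k / d| ≤ 1 / d := by
  obtain ⟨ht0, ht1⟩ := ht
  have hd' : (0 : ℝ) < d := by exact_mod_cast hd
  -- `⌊t d⌋` itself equals `d` when `t = 1`, hence the `min`.
  refine ⟨min ⌊t * d⌋₊ (d - 1), by omega, ?_⟩
  set k := min ⌊t * d⌋₊ (d - 1) with hk
  have hk_le : (k : ℝ) ≤ t * d :=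
    (Nat.cast_le.mpr (min_le_left _ _)).trans (Nat.floor_le (by positivity))
  have hk_ge : t * d ≤ k + 1 := by
    rcases le_total ⌊t * d⌋₊ (d - 1) with h | h
    · rw [hk, min_eq_left h]
      exact (Nat.lt_floor_add_one _).le
    · have : (k : ℝ) + 1 = d := by
        rw [hk, min_eq_right h]; push_cast [Nat.cast_sub hd]; ring
      nlinarith
  rw [abs_le]
  constructor <;> field_simp <;> linarith

theorem EuclideanSpace.infEDist_le_of_forall_apply_eq_mem {ι : Type*} [Fintype ι]
    {S : Set (EuclideanSpace ℝ ι)} {i : ι} {c : ℝ}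
    (hS : ∀ y : EuclideanSpace ℝ ι, y i = c → y ∈ S) (x : EuclideanSpace ℝ ι) :
    Metric.infEDist x S ≤ ENNReal.ofReal |x i - c| := by
  classical
  have hmem : x - EuclideanSpace.single i (x i - c) ∈ S := hS _ (by simp)
  refine (Metric.infEDist_le_edist_of_mem hmem).trans_eq ?_
  rw [edist_dist, dist_eq_norm, sub_sub_cancel, PiLp.norm_single, Real.norm_eq_abs]

/-- Sharpness of Wongkew's theorem: for every `n ≥ 1` and every `d ≥ 1` there is a
nonzero polynomial of total degree at most `d` in `n` real variables whose zero set
is `(1/d)`-dense in the unit cube `[0,1]^n`. -/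
theorem exists_poly_dense_zero_set
    (n : ℕ) (hn : 1 ≤ n) (d : ℕ) (hd : 0 < d) :
    ∃ Q : MvPolynomial (Fin n) ℝ, Q ≠ 0 ∧ Q.totalDegree ≤ d ∧
      ∀ x : EuclideanSpace ℝ (Fin n), (∀ i, x i ∈ Set.Icc (0 : ℝ) 1) →
        EMetric.infEdist x
            {y : EuclideanSpace ℝ (Fin n) | MvPolynomial.eval (fun i => y i) Q = 0}
          ≤ ENNReal.ofReal (1 / d) := by
  let i₀ : Fin n := ⟨0, hn⟩
  refine ⟨∏ j ∈ Finset.range d, (X i₀ - C ((j : ℝ) / d)),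
    Finset.prod_ne_zero_iff.mpr fun _ _ => X_sub_C_ne_zero _ _,
    (totalDegree_prod_X_sub_C_le _ _ _).trans_eq (Finset.card_range d), fun x hx => ?_⟩
  obtain ⟨k, hkd, hk⟩ := exists_lt_abs_sub_div_le (hx i₀) hd
  have hzero : ∀ y : EuclideanSpace ℝ (Fin n), y i₀ = k / d →
      eval (fun i => y i) (∏ j ∈ Finset.range d, (X i₀ - C ((j : ℝ) / d))) = 0 := fun y hy => by
    rw [eval_prod]
    exact Finset.prod_eq_zero (Finset.mem_range.mpr hkd) (by simp [hy])
  exact (EuclideanSpace.infEDist_le_of_forall_apply_eq_mem hzero x).trans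
    (ENNReal.ofReal_le_ofReal hk)
end

section
/- Let Q be a nonzero polynomial in n real variables of total degree d, and let Q_h be the homogeneous component of Q of degree d (its highest homogeneous part). If Q vanishes identically on a line {x + t•v : t ∈ ℝ} (where x ∈ ℝ^n and v ∈ ℝ^n with v ≠ 0), then Q_h(v) = 0. -/
open Polynomial in
private lemma coeff_prod_top {ι : Type*} (s : Finset ι) (g : ι → Polynomial ℝ) (m : ι → ℕ)
    (h : ∀ i ∈ s, (g i).natDegree ≤ m i) :
    (∏ i ∈ s, g i).coeff (∑ i ∈ s, m i) = ∏ i ∈ s, (g i).coeff (m i) := by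
  classical
  induction s using Finset.induction_on with
  | empty => simp
  | @insert a s ha ih =>
    rw [Finset.prod_insert ha, Finset.sum_insert ha, Finset.prod_insert ha,
      Polynomial.coeff_mul_add_eq_of_natDegree_le (h a (Finset.mem_insert_self a s))
        ((natDegree_prod_le _ _).trans (Finset.sum_le_sum fun i hi =>
          h i (Finset.mem_insert_of_mem hi))),
      ih fun i hi => h i (Finset.mem_insert_of_mem hi)]

/-- If a nonzero polynomial `Q` of total degree `d` vanishes identically on a line
`{x + t • v : t ∈ ℝ}` (with `v ≠ 0`), then its highest homogeneous part `Q_h`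
(the homogeneous component of degree `d`) vanishes at the direction `v`. -/
theorem highest_part_vanishes_on_direction
    {n : ℕ} (Q : MvPolynomial (Fin n) ℝ) (hQ : Q ≠ 0) (d : ℕ)
    (hd : Q.totalDegree = d)
    (x v : Fin n → ℝ) (hv : v ≠ 0)
    (hline : ∀ t : ℝ, MvPolynomial.eval (x + t • v) Q = 0) :
    MvPolynomial.eval v (MvPolynomial.homogeneousComponent d Q) = 0 := by
  classical
  set f : Fin n → Polynomial ℝ := fun i => Polynomial.C (x i) + Polynomial.C (v i) * Polynomial.X
    with hf
  have hfdeg : ∀ i, (f i).natDegree ≤ 1 := fun i => by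
    apply (Polynomial.natDegree_add_le _ _).trans
    simp [Polynomial.natDegree_C_mul_le]
    exact Polynomial.natDegree_C_mul_le _ _ |>.trans (by simp)
  have hfcoeff : ∀ i, (f i).coeff 1 = v i := fun i => by
    simp [hf, Polynomial.coeff_C]
  set φ : Polynomial ℝ := MvPolynomial.aeval f Q with hφ
  -- φ evaluated at t equals Q evaluated at x + t • v
  have heval : ∀ t : ℝ, φ.eval t = MvPolynomial.eval (x + t • v) Q := by
    intro t
    rw [hφ, MvPolynomial.aeval_def, ← Polynomial.coe_evalRingHom,
      MvPolynomial.eval₂_comp_left (Polynomial.evalRingHom t)]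
    have h1 : (Polynomial.evalRingHom t).comp (algebraMap ℝ (Polynomial ℝ)) = RingHom.id ℝ := by
      ext r; simp
    rw [h1]
    have h2 : ((Polynomial.evalRingHom t) ∘ f) = x + t • v := by
      funext i
      simp only [Function.comp_apply, hf, Polynomial.eval_add, Polynomial.eval_C,
        Polynomial.eval_mul, Polynomial.eval_X, Polynomial.coe_evalRingHom, Pi.add_apply,
        Pi.smul_apply, smul_eq_mul]
      ring
    rw [h2, MvPolynomial.eval]
    rfl
  have hφ0 : φ = 0 := by
    apply Polynomial.funext
    intro t
    rw [heval t, hline t, Polynomial.eval_zero]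
  -- the coefficient of t^d in φ is eval v of the homogeneous component
  have key : φ.coeff d = MvPolynomial.eval v (MvPolynomial.homogeneousComponent d Q) := by
    rw [MvPolynomial.homogeneousComponent_apply, map_sum, Finset.sum_filter]
    conv_lhs => rw [hφ, Q.as_sum, map_sum, Polynomial.finset_sum_coeff]
    apply Finset.sum_congr rfl
    intro s hs
    rw [MvPolynomial.aeval_monomial, Polynomial.algebraMap_eq, Polynomial.coeff_C_mul]
    have hprod : s.prod (fun i k => f i ^ k) = ∏ i ∈ s.support, f i ^ s i := rfl
    have hdegs : ∑ i ∈ s.support, s i ≤ d := by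
      rw [← hd]
      exact MvPolynomial.le_totalDegree hs
    have hdegprod : (∏ i ∈ s.support, f i ^ s i).natDegree ≤ ∑ i ∈ s.support, s i :=
      (Polynomial.natDegree_prod_le _ _).trans (Finset.sum_le_sum fun i _ =>
        (Polynomial.natDegree_pow_le).trans (by
          calc s i * (f i).natDegree ≤ s i * 1 := Nat.mul_le_mul_left _ (hfdeg i)
          _ = s i := mul_one _))
    by_cases hsd : s.degree = d
    · have hsum : ∑ i ∈ s.support, s i = d := hsd
      rw [if_pos hsd, hprod, ← hsum,
        coeff_prod_top s.support (fun i => f i ^ s i) (fun i => s i)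
          (fun i _ => (Polynomial.natDegree_pow_le).trans (by
            calc s i * (f i).natDegree ≤ s i * 1 := Nat.mul_le_mul_left _ (hfdeg i)
            _ = s i := mul_one _))]
      have : ∀ i ∈ s.support, (f i ^ s i).coeff (s i) = v i ^ s i := by
        intro i _
        have := Polynomial.coeff_pow_of_natDegree_le (p := f i) (n := 1) (m := s i) (hfdeg i)
        rw [mul_one] at this
        rw [this, hfcoeff i]
      rw [Finset.prod_congr rfl this, MvPolynomial.eval_monomial]
      rfl
    · rw [if_neg hsd]
      have hlt : (∏ i ∈ s.support, f i ^ s i).natDegree < d := by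
        refine lt_of_le_of_lt hdegprod ?_
        exact lt_of_le_of_ne hdegs hsd
      rw [hprod, Polynomial.coeff_eq_zero_of_natDegree_lt hlt, mul_zero]
  rw [← key, hφ0, Polynomial.coeff_zero]
end

section
/- Let Q be a nonzero polynomial in n real variables of total degree at most D (D a positive integer), and let l = {x + t•v : t ∈ ℝ} be a line in ℝ^n (v ≠ 0) that is not contained in the zero set Z(Q) = {y : Q(y) = 0}. Then l intersects at most D + 1 distinct connected components of the open set ℝ^n \ Z(Q). -/
private lemma gap_below (R : Finset ℝ) (s : ℝ) : ∃ a < s, ∀ r ∈ R, r ∉ Set.Ioo a s := by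
  classical
  by_cases h : (R.filter (· < s)).Nonempty
  · refine ⟨(R.filter (· < s)).max' h, ?_, ?_⟩
    · have hm := (R.filter (· < s)).max'_mem h
      exact (Finset.mem_filter.1 hm).2
    · intro r hr hio
      have hmem : r ∈ R.filter (· < s) := Finset.mem_filter.2 ⟨hr, hio.2⟩
      exact absurd (Finset.le_max' _ r hmem) (not_le.2 hio.1)
  · refine ⟨s - 1, by linarith, ?_⟩
    intro r hr hio
    exact h ⟨r, Finset.mem_filter.2 ⟨hr, hio.2⟩⟩

private lemma gap_above (R : Finset ℝ) (s : ℝ) : ∃ b > s, ∀ r ∈ R, r ∉ Set.Ioo s b := by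
  classical
  by_cases h : (R.filter (s < ·)).Nonempty
  · refine ⟨(R.filter (s < ·)).min' h, ?_, ?_⟩
    · have hm := (R.filter (s < ·)).min'_mem h
      exact (Finset.mem_filter.1 hm).2
    · intro r hr hio
      have hmem : r ∈ R.filter (s < ·) := Finset.mem_filter.2 ⟨hr, hio.1⟩
      exact absurd (Finset.min'_le _ r hmem) (not_le.2 hio.2)
  · refine ⟨s + 1, by linarith, ?_⟩
    intro r hr hio
    exact h ⟨r, Finset.mem_filter.2 ⟨hr, hio.1⟩⟩

private lemma ex_above (R : Finset ℝ) : ∃ M : ℝ, ∀ r ∈ R, r < M := by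
  obtain ⟨M, hM⟩ := R.bddAbove
  exact ⟨M + 1, fun r hr => lt_of_le_of_lt (hM hr) (by linarith)⟩

/-- A line not contained in the zero set of a nonzero polynomial of degree at most `D`
meets at most `D + 1` of the cells (connected components of the complement of the
zero set) determined by the polynomial. -/
theorem line_meets_few_cells
    {n : ℕ} (Q : MvPolynomial (Fin n) ℝ) (hQ : Q ≠ 0) (D : ℕ) (hD : 0 < D)
    (hdeg : Q.totalDegree ≤ D)
    (x v : EuclideanSpace ℝ (Fin n)) (hv : v ≠ 0)
    (l : Set (EuclideanSpace ℝ (Fin n)))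
    (hl : l = {y | ∃ t : ℝ, y = x + t • v})
    (hnot : ¬ l ⊆ {y : EuclideanSpace ℝ (Fin n) | MvPolynomial.eval (fun i => y i) Q = 0}) :
    Set.ncard {U : Set (EuclideanSpace ℝ (Fin n)) |
        (∃ z : EuclideanSpace ℝ (Fin n), MvPolynomial.eval (fun i => z i) Q ≠ 0 ∧
          U = connectedComponentIn
            {y : EuclideanSpace ℝ (Fin n) | MvPolynomial.eval (fun i => y i) Q ≠ 0} z) ∧
        (U ∩ l).Nonempty} ≤ D + 1 := by
  classical
  set Ω : Set (EuclideanSpace ℝ (Fin n)) :=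
    {y | MvPolynomial.eval (fun i => y i) Q ≠ 0} with hΩdef
  set φ : ℝ → EuclideanSpace ℝ (Fin n) := fun t => x + t • v with hφdef
  have hφc : Continuous φ := continuous_const.add (continuous_id.smul continuous_const)
  set p : Polynomial ℝ :=
    MvPolynomial.aeval (fun i => Polynomial.C (x i) + Polynomial.C (v i) * Polynomial.X) Q
    with hpdef
  -- evaluation of p along the line
  have hpe : ∀ t : ℝ, Polynomial.eval t p = MvPolynomial.eval (fun i => (φ t) i) Q := by
    intro t
    rw [hpdef, MvPolynomial.aeval_def]
    rw [show Polynomial.eval t (MvPolynomial.eval₂ (algebraMap ℝ (Polynomial ℝ))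
          (fun i => Polynomial.C (x i) + Polynomial.C (v i) * Polynomial.X) Q)
        = (Polynomial.evalRingHom t) (MvPolynomial.eval₂ (algebraMap ℝ (Polynomial ℝ))
          (fun i => Polynomial.C (x i) + Polynomial.C (v i) * Polynomial.X) Q) from rfl]
    rw [MvPolynomial.eval₂_comp_left (Polynomial.evalRingHom t)]
    have h1 : (Polynomial.evalRingHom t).comp (algebraMap ℝ (Polynomial ℝ)) = RingHom.id ℝ := by
      ext a; simp
    have h2 : ((Polynomial.evalRingHom t) ∘
        fun i => Polynomial.C (x i) + Polynomial.C (v i) * Polynomial.X)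
        = fun i => (φ t) i := by
      funext i
      have hco : (φ t) i = x i + t * v i := rfl
      rw [Function.comp_apply, hco, Polynomial.coe_evalRingHom]
      simp only [Polynomial.eval_add, Polynomial.eval_mul, Polynomial.eval_C, Polynomial.eval_X]
      ring
    rw [h1, h2]
    rfl
  -- p is not the zero polynomial
  obtain ⟨y₀, hy₀l, hy₀⟩ := Set.not_subset.1 hnot
  rw [hl] at hy₀l
  obtain ⟨t₀, ht₀⟩ := hy₀l
  have hpne : p ≠ 0 := by
    intro h
    apply hy₀
    have := hpe t₀
    rw [h] at this
    simp only [Polynomial.eval_zero] at this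
    show MvPolynomial.eval (fun i => y₀ i) Q = 0
    rw [show y₀ = φ t₀ from ht₀]
    exact this.symm
  -- degree bound
  have hpdeg : p.natDegree ≤ D := by
    have h := MvPolynomial.aeval_natDegree_le (n := 1) Q hdeg
      (fun i => Polynomial.C (x i) + Polynomial.C (v i) * Polynomial.X) ?_
    · simpa using h
    · intro i
      refine (Polynomial.natDegree_add_le _ _).trans ?_
      simp only [Polynomial.natDegree_C, max_le_iff]
      exact ⟨Nat.zero_le _, (Polynomial.natDegree_C_mul_le _ _).trans (by simp)⟩
  set R : Finset ℝ := p.roots.toFinset with hRdef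
  have hRcard : R.card ≤ D :=
    le_trans (le_trans (Multiset.toFinset_card_le _) p.card_roots') hpdeg
  have hroot : ∀ t : ℝ, Polynomial.eval t p ≠ 0 ↔ t ∉ R := by
    intro t
    rw [hRdef]
    simp [Multiset.mem_toFinset, Polynomial.mem_roots hpne, Polynomial.IsRoot]
  -- Ω is open
  have hQcont : Continuous fun (y : EuclideanSpace ℝ (Fin n)) =>
      MvPolynomial.eval (fun i => y i) Q := by
    have h : Continuous fun (y : EuclideanSpace ℝ (Fin n)) => (fun i => y i : Fin n → ℝ) :=
      continuous_pi fun i => (continuous_apply i).comp (PiLp.continuous_ofLp 2 _)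
    exact (MvPolynomial.continuous_eval Q).comp h
  have hΩopen : IsOpen Ω := by
    have h : Ω = (fun y : EuclideanSpace ℝ (Fin n) =>
        MvPolynomial.eval (fun i => y i) Q) ⁻¹' {(0:ℝ)}ᶜ := by
      ext y; simp [hΩdef]
    rw [h]
    exact isOpen_compl_singleton.preimage hQcont
  -- moving along a root-free segment stays in the same cell
  have hmove : ∀ (w : EuclideanSpace ℝ (Fin n)), w ∈ Ω → ∀ t₁ t₂ : ℝ, t₁ ≤ t₂ →
      (∀ u ∈ Set.Icc t₁ t₂, Polynomial.eval u p ≠ 0) →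
      φ t₁ ∈ connectedComponentIn Ω w → φ t₂ ∈ connectedComponentIn Ω w := by
    intro w hw t₁ t₂ h12 hfree h1
    have hK : IsPreconnected (φ '' Set.Icc t₁ t₂) :=
      isPreconnected_Icc.image φ hφc.continuousOn
    have hKΩ : φ '' Set.Icc t₁ t₂ ⊆ Ω := by
      rintro _ ⟨u, hu, rfl⟩
      have hne := hfree u hu
      rw [hpe u] at hne
      exact hne
    have hmem : φ t₁ ∈ φ '' Set.Icc t₁ t₂ := ⟨t₁, ⟨le_refl _, h12⟩, rfl⟩
    have hsub : φ '' Set.Icc t₁ t₂ ⊆ connectedComponentIn Ω (φ t₁) :=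
      hK.subset_connectedComponentIn hmem hKΩ
    have heq : connectedComponentIn Ω (φ t₁) = connectedComponentIn Ω w :=
      (connectedComponentIn_eq h1).symm
    rw [← heq]
    exact hsub ⟨t₂, ⟨h12, le_refl _⟩, rfl⟩
  set 𝒜 : Set (Set (EuclideanSpace ℝ (Fin n))) :=
    {U | (∃ z : EuclideanSpace ℝ (Fin n), MvPolynomial.eval (fun i => z i) Q ≠ 0 ∧
          U = connectedComponentIn Ω z) ∧ (U ∩ l).Nonempty} with h𝒜def
  show 𝒜.ncard ≤ D + 1
  -- every cell in 𝒜 meets the line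
  have hcell : ∀ U ∈ 𝒜, ∃ t, φ t ∈ U := by
    intro U hU
    rw [h𝒜def] at hU
    obtain ⟨w, hwU, hwl⟩ := hU.2
    rw [hl] at hwl
    obtain ⟨t, htw⟩ := hwl
    exact ⟨t, by rw [show φ t = x + t • v from rfl, ← htw]; exact hwU⟩
  have hUptwise : ∀ U ∈ 𝒜, ∀ w ∈ U, U = connectedComponentIn Ω w ∧ w ∈ Ω := by
    intro U hU w hw
    rw [h𝒜def] at hU
    obtain ⟨⟨z, hz, rfl⟩, -⟩ := hU
    exact ⟨connectedComponentIn_eq hw, connectedComponentIn_subset _ _ hw⟩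
  have hUopen : ∀ U ∈ 𝒜, IsOpen {t : ℝ | φ t ∈ U} := by
    intro U hU
    rw [h𝒜def] at hU
    obtain ⟨⟨z, hz, rfl⟩, -⟩ := hU
    exact IsOpen.preimage hφc hΩopen.connectedComponentIn
  -- near the supremum of the parameter set we stay in the cell
  have hsup : ∀ U ∈ 𝒜, BddAbove {t : ℝ | φ t ∈ U} → ∀ a < sSup {t : ℝ | φ t ∈ U},
      ∃ t, φ t ∈ U ∧ a < t ∧ t < sSup {t : ℝ | φ t ∈ U} := by
    intro U hU hbd a ha
    obtain ⟨t₁, ht₁⟩ := hcell U hU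
    have hne : {t : ℝ | φ t ∈ U}.Nonempty := ⟨t₁, ht₁⟩
    obtain ⟨t, htU, hat⟩ := exists_lt_of_lt_csSup hne ha
    have hts : t ≤ sSup {t : ℝ | φ t ∈ U} := le_csSup hbd htU
    have hnotmem : sSup {t : ℝ | φ t ∈ U} ∉ {t : ℝ | φ t ∈ U} := by
      intro hmem
      obtain ⟨ε, hε, hball⟩ := Metric.isOpen_iff.1 (hUopen U hU) _ hmem
      have hd : dist (sSup {t : ℝ | φ t ∈ U} + ε/2) (sSup {t : ℝ | φ t ∈ U}) = ε/2 := by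
        rw [Real.dist_eq]
        have he : sSup {t : ℝ | φ t ∈ U} + ε/2 - sSup {t : ℝ | φ t ∈ U} = ε/2 := by ring
        rw [he, abs_of_pos (by linarith)]
      have hin : (sSup {t : ℝ | φ t ∈ U} + ε/2) ∈ {t : ℝ | φ t ∈ U} :=
        hball (by rw [Metric.mem_ball, hd]; linarith)
      have := le_csSup hbd hin
      linarith
    exact ⟨t, htU, hat, lt_of_le_of_ne hts fun h => hnotmem (h ▸ htU)⟩
  -- two cells linked by a root-free segment coincide
  have hmerge : ∀ U ∈ 𝒜, ∀ U' ∈ 𝒜, ∀ t t' : ℝ, t ≤ t' → φ t ∈ U → φ t' ∈ U' →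
      (∀ u ∈ Set.Icc t t', Polynomial.eval u p ≠ 0) → U = U' := by
    intro U hU U' hU' t t' htt ht ht' hfree
    obtain ⟨hUeq, hUΩ⟩ := hUptwise U hU (φ t) ht
    have h2 : φ t' ∈ connectedComponentIn Ω (φ t) :=
      hmove (φ t) hUΩ t t' htt hfree (mem_connectedComponentIn hUΩ)
    have h3 : φ t' ∈ U := by rw [hUeq]; exact h2
    obtain ⟨hU'eq, -⟩ := hUptwise U' hU' (φ t') ht'
    obtain ⟨hUeq2, -⟩ := hUptwise U hU (φ t') h3
    rw [hU'eq, ← hUeq2]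
  have hmerge2 : ∀ U ∈ 𝒜, ∀ U' ∈ 𝒜, ∀ t t' : ℝ, φ t ∈ U → φ t' ∈ U' →
      (∀ u ∈ Set.Icc (min t t') (max t t'), Polynomial.eval u p ≠ 0) → U = U' := by
    intro U hU U' hU' t t' ht ht' hfree
    rcases le_total t t' with h | h
    · exact hmerge U hU U' hU' t t' h ht ht'
        (by rwa [min_eq_left h, max_eq_right h] at hfree)
    · exact (hmerge U' hU' U hU t' t h ht' ht
        (by rwa [min_eq_right h, max_eq_left h] at hfree)).symm
  -- the counting map
  set g : Set (EuclideanSpace ℝ (Fin n)) → WithTop ℝ := fun U =>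
    if BddAbove {t : ℝ | φ t ∈ U} then ((sSup {t : ℝ | φ t ∈ U} : ℝ) : WithTop ℝ) else ⊤
    with hgdef
  have hinj : Set.InjOn g 𝒜 := by
    intro U hU U' hU' hgU
    by_cases hb : BddAbove {t : ℝ | φ t ∈ U} <;>
      by_cases hb' : BddAbove {t : ℝ | φ t ∈ U'}
    · -- both bounded above
      simp only [hgdef, if_pos hb, if_pos hb', WithTop.coe_eq_coe] at hgU
      obtain ⟨a, has, hafree⟩ := gap_below R (sSup {t : ℝ | φ t ∈ U})
      obtain ⟨t, htU, hat, hts⟩ := hsup U hU hb a has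
      obtain ⟨t', htU', hat', hts'⟩ := hsup U' hU' hb' a (by rw [← hgU]; exact has)
      rw [← hgU] at hts'
      refine hmerge2 U hU U' hU' t t' htU htU' ?_
      intro u hu
      refine (hroot u).2 fun hr => hafree u hr ?_
      constructor
      · calc a < min t t' := lt_min hat hat'
          _ ≤ u := hu.1
      · calc u ≤ max t t' := hu.2
          _ < sSup {t : ℝ | φ t ∈ U} := max_lt hts hts'
    · exfalso
      simp only [hgdef, if_pos hb, if_neg hb'] at hgU
      exact WithTop.coe_ne_top hgU
    · exfalso
      simp only [hgdef, if_neg hb, if_pos hb'] at hgU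
      exact WithTop.coe_ne_top hgU.symm
    · -- both unbounded above
      obtain ⟨M, hM⟩ := ex_above R
      obtain ⟨t, htU, htM⟩ := not_bddAbove_iff.1 hb M
      obtain ⟨t', htU', htM'⟩ := not_bddAbove_iff.1 hb' M
      refine hmerge2 U hU U' hU' t t' htU htU' ?_
      intro u hu
      refine (hroot u).2 fun hr => ?_
      have h1 : M < u := lt_of_lt_of_le (lt_min htM htM') hu.1
      have h2 : u < M := hM u hr
      linarith
  have himg : g '' 𝒜 ⊆ insert ⊤ ((fun r : ℝ => (r : WithTop ℝ)) '' (R : Set ℝ)) := by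
    rintro _ ⟨U, hU, rfl⟩
    by_cases hb : BddAbove {t : ℝ | φ t ∈ U}
    · refine Set.mem_insert_iff.2 (Or.inr ⟨sSup {t : ℝ | φ t ∈ U}, ?_, ?_⟩)
      · -- the supremum is a root
        by_contra hsR
        have hs_ne : Polynomial.eval (sSup {t : ℝ | φ t ∈ U}) p ≠ 0 := (hroot _).2 hsR
        obtain ⟨a, has, hafree⟩ := gap_below R (sSup {t : ℝ | φ t ∈ U})
        obtain ⟨b, hsb, hbfree⟩ := gap_above R (sSup {t : ℝ | φ t ∈ U})
        obtain ⟨t, htU, hat, hts⟩ := hsup U hU hb a has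
        set s := sSup {t : ℝ | φ t ∈ U} with hsdef
        have hfree : ∀ u ∈ Set.Icc t ((s + b)/2), Polynomial.eval u p ≠ 0 := by
          intro u hu
          rcases lt_trichotomy u s with h | h | h
          · exact (hroot u).2 fun hr => hafree u hr ⟨lt_of_lt_of_le hat hu.1, h⟩
          · rw [h]; exact hs_ne
          · refine (hroot u).2 fun hr => hbfree u hr ⟨h, ?_⟩
            calc u ≤ (s + b)/2 := hu.2
              _ < b := by linarith
        obtain ⟨hUeq, hUΩ⟩ := hUptwise U hU (φ t) htU
        have hmem2 : φ ((s + b)/2) ∈ connectedComponentIn Ω (φ t) :=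
          hmove (φ t) hUΩ t ((s + b)/2) (by linarith) hfree (mem_connectedComponentIn hUΩ)
        have ht₂U : φ ((s + b)/2) ∈ U := by rw [hUeq]; exact hmem2
        have hle : (s + b)/2 ≤ s := le_csSup hb ht₂U
        linarith
      · simp only [hgdef, if_pos hb]
    · refine Set.mem_insert_iff.2 (Or.inl ?_)
      simp only [hgdef, if_neg hb]
  calc 𝒜.ncard = (g '' 𝒜).ncard := (Set.ncard_image_of_injOn hinj).symm
    _ ≤ (insert ⊤ ((fun r : ℝ => (r : WithTop ℝ)) '' (R : Set ℝ))).ncard :=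
        Set.ncard_le_ncard himg ((R.finite_toSet.image _).insert ⊤)
    _ ≤ ((fun r : ℝ => (r : WithTop ℝ)) '' (R : Set ℝ)).ncard + 1 := Set.ncard_insert_le _ _
    _ ≤ R.card + 1 := by
        have h := Set.ncard_image_le (s := (R : Set ℝ))
          (f := fun r : ℝ => (r : WithTop ℝ)) R.finite_toSet
        rw [Set.ncard_coe_finset] at h
        omega
    _ ≤ D + 1 := by omega
end

section
/- For every integer n ≥ 1 there exists a constant c_n > 0 such that for every finite field F and every Kakeya set K ⊆ F^n, one has |K| ≥ c_n·|F|^n. -/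
/-!
Dvir's polynomial method. If a Kakeya set `K ⊆ 𝔽_q^n` had fewer than `(d + 1)^n` points, linear
algebra would give a nonzero polynomial `p`, of degree at most `d` in each variable, vanishing on
`K`; taking `n * d < q`, its total degree `D` is below `q`. Restricted to a line `x + t • v`
contained in `K`, `p` becomes a univariate polynomial of degree `≤ D < q` with `q` roots, hence
zero; its `t^D` coefficient is the top homogeneous component `p_D` evaluated at `v`. So `p_D`
vanishes on all of `𝔽_q^n` although it is nonzero and homogeneous of degree `< q`, a
contradiction. With `d + 1 = ⌈q / n⌉` this gives `q^n ≤ n^n |K|`.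
-/

open scoped Polynomial

theorem Finsupp.prod_pow_eq_prod_map_toMultiset {σ M : Type*} [CommMonoid M] (s : σ →₀ ℕ)
    (g : σ → M) : (s.prod fun i e => g i ^ e) = (s.toMultiset.map g).prod := by
  rw [Finsupp.toMultiset_map, Finsupp.prod_toMultiset,
    Finsupp.prod_mapDomain_index (fun _ => pow_zero _) (fun _ _ _ => pow_add _ _ _)]

namespace Polynomial

variable {R σ : Type*} [CommSemiring R] {f : σ → R[X]}

theorem natDegree_finsuppProd_pow_le (hf : ∀ i, (f i).natDegree ≤ 1) (s : σ →₀ ℕ) :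
    (s.prod fun i e => f i ^ e).natDegree ≤ s.degree := by
  rw [Finsupp.prod_pow_eq_prod_map_toMultiset]
  calc _ ≤ ((s.toMultiset.map f).map natDegree).sum := natDegree_multiset_prod_le _
    _ ≤ (s.toMultiset.map fun _ => 1).sum := by
      rw [Multiset.map_map]; exact Multiset.sum_map_le_sum_map _ _ fun i _ => hf i
    _ = s.degree := by simp [Finsupp.degree_apply, Finsupp.sum]

theorem coeff_finsuppProd_pow_degree (hf : ∀ i, (f i).natDegree ≤ 1) (s : σ →₀ ℕ) :
    (s.prod fun i e => f i ^ e).coeff s.degree = s.prod fun i e => (f i).coeff 1 ^ e := by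
  have hcard : Multiset.card (s.toMultiset.map f) * 1 = s.degree := by
    simp [Finsupp.degree_apply, Finsupp.sum]
  rw [Finsupp.prod_pow_eq_prod_map_toMultiset, Finsupp.prod_pow_eq_prod_map_toMultiset, ← hcard,
    coeff_multiset_prod_of_natDegree_le _ _ (by simpa using fun i _ => hf i), Multiset.map_map]
  rfl

end Polynomial

namespace MvPolynomial

variable {R σ : Type*} [CommRing R]

noncomputable def restrictToLine (x v : σ → R) : MvPolynomial σ R →ₐ[R] R[X] :=
  aeval fun i => Polynomial.C (v i) * Polynomial.X + Polynomial.C (x i)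

section LineRestriction

variable (x v : σ → R)

theorem eval_restrictToLine (p : MvPolynomial σ R) (t : R) :
    (restrictToLine x v p).eval t = eval (x + t • v) p := by
  have h : (Polynomial.evalRingHom t).comp (restrictToLine x v : MvPolynomial σ R →+* R[X]) =
      eval (x + t • v) :=
    ringHom_ext (fun r => by simp [restrictToLine]) (fun i => by simp [restrictToLine]; ring)
  exact RingHom.congr_fun h p

theorem restrictToLine_monomial (s : σ →₀ ℕ) (c : R) :
    restrictToLine x v (monomial s c) =
      Polynomial.C c *
        s.prod fun i e => (Polynomial.C (v i) * Polynomial.X + Polynomial.C (x i)) ^ e :=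
  aeval_monomial _ _ _

theorem natDegree_restrictToLine_le (p : MvPolynomial σ R) :
    (restrictToLine x v p).natDegree ≤ p.totalDegree := by
  conv_lhs => rw [p.as_sum, map_sum]
  refine Polynomial.natDegree_sum_le_of_forall_le _ _ fun s hs => ?_
  rw [restrictToLine_monomial]
  exact Polynomial.natDegree_C_mul_le _ _ |>.trans <|
    (Polynomial.natDegree_finsuppProd_pow_le (fun _ => Polynomial.natDegree_linear_le) s).trans
      (le_totalDegree hs)

theorem coeff_restrictToLine_of_totalDegree_le {p : MvPolynomial σ R} {n : ℕ}
    (hn : p.totalDegree ≤ n) :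
    (restrictToLine x v p).coeff n = eval v (homogeneousComponent n p) := by
  conv_lhs => rw [p.as_sum, map_sum, Polynomial.finsetSum_coeff]
  rw [homogeneousComponent_apply, map_sum, Finset.sum_filter]
  refine Finset.sum_congr rfl fun s hs => ?_
  have hline : ∀ i, (Polynomial.C (v i) * Polynomial.X + Polynomial.C (x i)).natDegree ≤ 1 :=
    fun _ => Polynomial.natDegree_linear_le
  rw [restrictToLine_monomial, Polynomial.coeff_C_mul]
  split_ifs with hsn
  · subst hsn
    simp [Polynomial.coeff_finsuppProd_pow_degree hline, eval_monomial]
  · have hlt : s.degree < n := lt_of_le_of_ne ((le_totalDegree hs).trans hn) hsn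
    rw [Polynomial.coeff_eq_zero_of_natDegree_lt
      ((Polynomial.natDegree_finsuppProd_pow_le hline s).trans_lt hlt), mul_zero]

end LineRestriction

theorem homogeneousComponent_totalDegree_ne_zero {p : MvPolynomial σ R} (hp : p ≠ 0) :
    homogeneousComponent p.totalDegree p ≠ 0 := by
  obtain ⟨s, hs, hdeg⟩ :=
    Finset.exists_mem_eq_sup p.support (support_nonempty.mpr hp) Finsupp.degree
  intro h
  have := congr_arg (coeff s) h
  rw [coeff_homogeneousComponent, if_pos (show s.degree = p.totalDegree from hdeg.symm),
    coeff_zero] at this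
  exact mem_support_iff.mp hs this

theorem eq_zero_of_forall_exists_line_eval_eq_zero {F : Type*} [Field F] [Fintype F]
    {p : MvPolynomial σ F} (hdeg : p.totalDegree < Fintype.card F)
    (hline : ∀ v, ∃ x, ∀ t : F, eval (x + t • v) p = 0) : p = 0 := by
  by_contra hp
  refine homogeneousComponent_totalDegree_ne_zero hp <|
    (homogeneousComponent_isHomogeneous _ p).eq_zero_of_forall_eval_eq_zero_of_le_card
      (fun v => ?_) (by rw [Cardinal.mk_fintype]; exact_mod_cast hdeg.le)
  obtain ⟨x, hx⟩ := hline v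
  have hQ : restrictToLine x v p = 0 :=
    Polynomial.eq_zero_of_natDegree_lt_card_of_eval_eq_zero' _ Finset.univ
      (fun t _ => by rw [eval_restrictToLine, hx])
      ((natDegree_restrictToLine_le x v p).trans_lt hdeg)
  rw [← coeff_restrictToLine_of_totalDegree_le x v le_rfl, hQ, Polynomial.coeff_zero]

theorem finrank_restrictDegree [Nontrivial R] [Fintype σ] (d : ℕ) :
    Module.finrank R (restrictDegree σ R d) = (d + 1) ^ Fintype.card σ := by
  let e : {s : σ →₀ ℕ | ∀ i, s i ≤ d} ≃ (σ → Fin (d + 1)) :=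
    { toFun s i := ⟨s.1 i, Nat.lt_succ_of_le (s.2 i)⟩
      invFun f :=
        ⟨Finsupp.equivFunOnFinite.symm fun i => f i, fun i => Nat.le_of_lt_succ (f i).2⟩
      left_inv s := by ext; simp
      right_inv f := by ext; simp }
  have : Finite {s : σ →₀ ℕ | ∀ i, s i ≤ d} := .of_equiv _ e.symm
  rw [restrictDegree, Module.finrank_eq_nat_card_basis (basisRestrictSupport R _),
    Nat.card_congr e, Nat.card_fun, Nat.card_eq_fintype_card, Fintype.card_fin,
    Nat.card_eq_fintype_card]

theorem totalDegree_le_of_mem_restrictDegree [Fintype σ] {p : MvPolynomial σ R} {d : ℕ}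
    (hp : p ∈ restrictDegree σ R d) : p.totalDegree ≤ Fintype.card σ * d := by
  rw [mem_restrictDegree] at hp
  refine Finset.sup_le fun s hs => ?_
  calc (s.sum fun _ e => e) = ∑ i, s i := s.degree_eq_sum
    _ ≤ ∑ _i : σ, d := Finset.sum_le_sum fun i _ => hp s hs i
    _ = Fintype.card σ * d := by simp

theorem exists_mem_restrictDegree_ne_zero_forall_eval_eq_zero {F : Type*} [Field F] [Fintype σ]
    (d : ℕ) {K : Set (σ → F)} (hK : K.Finite) (hcard : K.ncard < (d + 1) ^ Fintype.card σ) :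
    ∃ p ∈ restrictDegree σ F d, p ≠ 0 ∧ ∀ x ∈ K, eval x p = 0 := by
  have := hK.fintype
  have : FiniteDimensional F (restrictDegree σ F d) :=
    .of_finrank_pos (by rw [finrank_restrictDegree]; positivity)
  let f : restrictDegree σ F d →ₗ[F] K → F :=
    LinearMap.funLeft F F ((↑) : K → σ → F) ∘ₗ evalₗ F σ ∘ₗ
      (restrictDegree σ F d).subtype
  have hrank : Module.finrank F (K → F) < Module.finrank F (restrictDegree σ F d) := by
    rwa [Module.finrank_fintype_fun_eq_card, finrank_restrictDegree, ← Nat.card_eq_fintype_card,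
      Nat.card_coe_set_eq]
  obtain ⟨⟨p, hpd⟩, hpker, hp0⟩ :=
    (Submodule.ne_bot_iff _).mp (f.ker_ne_bot_of_finrank_lt hrank)
  exact ⟨p, hpd, by simpa using hp0, fun x hx => congr_fun hpker ⟨x, hx⟩⟩

end MvPolynomial

section Kakeya

open MvPolynomial

variable {F σ : Type*} [Field F]

def IsKakeyaSet (K : Set (σ → F)) : Prop :=
  ∀ v : σ → F, v ≠ 0 → ∃ x : σ → F, ∀ t : F, x + t • v ∈ K

theorem IsKakeyaSet.exists_line [Nonempty σ] {K : Set (σ → F)} (hK : IsKakeyaSet K)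
    (v : σ → F) : ∃ x : σ → F, ∀ t : F, x + t • v ∈ K := by
  rcases eq_or_ne v 0 with rfl | hv
  · obtain ⟨w, hw⟩ := exists_ne (0 : σ → F)
    obtain ⟨x, hx⟩ := hK w hw
    exact ⟨x, fun t => by simpa using hx 0⟩
  · exact hK v hv

variable [Fintype F] [Fintype σ] [Nonempty σ]

theorem IsKakeyaSet.pow_le_ncard {K : Set (σ → F)} (hK : IsKakeyaSet K) {d : ℕ}
    (hd : Fintype.card σ * d < Fintype.card F) : (d + 1) ^ Fintype.card σ ≤ K.ncard := by
  by_contra! hcard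
  obtain ⟨p, hpd, hp0, hpK⟩ :=
    exists_mem_restrictDegree_ne_zero_forall_eval_eq_zero d K.toFinite hcard
  refine hp0 (eq_zero_of_forall_exists_line_eval_eq_zero
    ((totalDegree_le_of_mem_restrictDegree hpd).trans_lt hd) fun v => ?_)
  obtain ⟨x, hx⟩ := hK.exists_line v
  exact ⟨x, fun t => hpK _ (hx t)⟩

theorem IsKakeyaSet.card_pow_le_mul_ncard {K : Set (σ → F)} (hK : IsKakeyaSet K) :
    Fintype.card F ^ Fintype.card σ ≤ Fintype.card σ ^ Fintype.card σ * K.ncard := by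
  set n := Fintype.card σ
  set q := Fintype.card F
  have hn : 0 < n := Fintype.card_pos
  have hq : 0 < q := Fintype.card_pos
  set d := (q - 1) / n
  have hd : n * d < q := (Nat.mul_div_le (q - 1) n).trans_lt (Nat.sub_lt hq one_pos)
  have hqd : q ≤ n * (d + 1) := Nat.le_of_pred_lt (Nat.lt_mul_div_succ (q - 1) hn)
  calc q ^ n ≤ (n * (d + 1)) ^ n := Nat.pow_le_pow_left hqd n
    _ = n ^ n * (d + 1) ^ n := mul_pow _ _ _
    _ ≤ n ^ n * K.ncard := Nat.mul_le_mul_left _ (hK.pow_le_ncard hd)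

end Kakeya

/-- Dvir's theorem: Kakeya sets in `F^n` over a finite field `F` have full dimension,
i.e. cardinality at least `c_n · |F|^n`. -/
theorem finite_field_kakeya (n : ℕ) (hn : 1 ≤ n) :
    ∃ c : ℝ, 0 < c ∧
      ∀ (F : Type) [Field F] [Fintype F],
        ∀ K : Set (Fin n → F),
          (∀ v : Fin n → F, v ≠ 0 → ∃ x : Fin n → F, ∀ t : F, x + t • v ∈ K) →
          c * (Fintype.card F : ℝ) ^ n ≤ (K.ncard : ℝ) := by
  have : Nonempty (Fin n) := ⟨⟨0, hn⟩⟩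
  refine ⟨1 / (n : ℝ) ^ n, by positivity, fun F _ _ K hK => ?_⟩
  have hbound := IsKakeyaSet.card_pow_le_mul_ncard (F := F) hK
  rw [Fintype.card_fin] at hbound
  rw [one_div_mul_eq_div, div_le_iff₀ (by positivity), mul_comm]
  exact_mod_cast hbound
end

section
/- For every integer n ≥ 2 there exists a constant C_n > 0 such that for every finite set L of lines in ℝ^n, the number of joints of L is at most C_n·|L|^{n/(n-1)}. Here a joint of L is a point p ∈ ℝ^n such that there exist n lines of L, each passing through p, whose direction vectors are linearly independent. -/
def IsLine' {n : ℕ} (l : Set (EuclideanSpace ℝ (Fin n))) : Prop :=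
  ∃ (x v : EuclideanSpace ℝ (Fin n)), v ≠ 0 ∧ l = {y | ∃ t : ℝ, y = x + t • v}

def IsJoint {n : ℕ} (L : Set (Set (EuclideanSpace ℝ (Fin n))))
    (p : EuclideanSpace ℝ (Fin n)) : Prop :=
  ∃ v : Fin n → EuclideanSpace ℝ (Fin n),
    LinearIndependent ℝ v ∧
    ∀ i : Fin n, {y | ∃ t : ℝ, y = p + t • v i} ∈ L

/-!
The polynomial method of Guth–Katz, in the form of Quilodrán and Kaplan–Sharir–Shustin.
Let `J` be the set of joints and `m ^ n > |J|`. Counting monomials with all exponents below `m`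
gives a nonzero polynomial of degree at most `n (m - 1)` vanishing on `J`. If every line of `L`
carried more than `n (m - 1)` joints, a polynomial of that degree vanishing on `J` would vanish on
every line of `L`, so its derivatives along the `n` independent directions at a joint, hence its
whole gradient there, would vanish; the partial derivatives have lower degree, and by induction
every such polynomial is zero. So some line carries at most `n (m - 1)` joints, and removing lines
one by one gives `|J| ≤ n (m - 1) |L|`. With `m - 1 = ⌊|J| ^ (1/n)⌋` this reads
`|J| ^ (1 - 1/n) ≤ n |L|`.
-/

open scoped Polynomial

namespace MvPolynomial

variable {R σ : Type*} [CommRing R]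

noncomputable def lineRestrict (x v : σ → R) : MvPolynomial σ R →ₐ[R] R[X] :=
  aeval fun i => Polynomial.C (v i) * Polynomial.X + Polynomial.C (x i)

theorem lineRestrict_X (x v : σ → R) (i : σ) :
    lineRestrict x v (X i) = Polynomial.C (v i) * Polynomial.X + Polynomial.C (x i) :=
  aeval_X _ _

theorem eval_lineRestrict (x v : σ → R) (P : MvPolynomial σ R) (t : R) :
    (lineRestrict x v P).eval t = eval (x + t • v) P := by
  induction P using MvPolynomial.induction_on with
  | C a => simp [lineRestrict]
  | add p q hp hq => simp [hp, hq]
  | mul_X p i hp =>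
    simp only [map_mul, Polynomial.eval_mul, hp, lineRestrict_X, Polynomial.eval_add,
      Polynomial.eval_C, Polynomial.eval_X, eval_X, Pi.add_apply, Pi.smul_apply, smul_eq_mul]
    ring

theorem derivative_lineRestrict [Fintype σ] (x v : σ → R) (P : MvPolynomial σ R) :
    Polynomial.derivative (lineRestrict x v P) =
      ∑ i, Polynomial.C (v i) * lineRestrict x v (pderiv i P) := by
  classical
  induction P using MvPolynomial.induction_on with
  | C a => simp [lineRestrict]
  | add p q hp hq => simp [hp, hq, mul_add, Finset.sum_add_distrib]
  | mul_X p i hp =>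
    have hsingle : ∑ j, Polynomial.C (v j) * lineRestrict x v p *
        lineRestrict x v (Pi.single (M := fun _ => MvPolynomial σ R) j 1 i) =
        Polynomial.C (v i) * lineRestrict x v p :=
      (Fintype.sum_eq_single i fun j hj => by simp [Ne.symm hj]).trans (by simp)
    simp only [pderiv_mul, pderiv_X, map_add, map_mul, mul_add, Finset.sum_add_distrib,
      ← mul_assoc, ← Finset.sum_mul, hsingle, Polynomial.derivative_mul, hp, lineRestrict_X,
      Polynomial.derivative_X, mul_one, Polynomial.derivative_C, mul_zero, add_zero]
    ring

theorem natDegree_lineRestrict_le (x v : σ → R) (P : MvPolynomial σ R) :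
    (lineRestrict x v P).natDegree ≤ P.totalDegree := by
  classical
  conv_lhs => rw [P.as_sum, map_sum]
  refine Polynomial.natDegree_sum_le_of_forall_le _ _ fun s hs => ?_
  rw [lineRestrict, aeval_monomial, Polynomial.algebraMap_eq]
  refine (Polynomial.natDegree_C_mul_le _ _).trans <|
    (Polynomial.natDegree_prod_le _ _).trans <| le_trans ?_ (le_totalDegree hs)
  exact Finset.sum_le_sum fun i _ =>
    (Polynomial.natDegree_pow_le_of_le _ Polynomial.natDegree_linear_le).trans (mul_one _).le

theorem dotProduct_eval_pderiv_eq_zero [IsDomain R] [Fintype σ] {P : MvPolynomial σ R}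
    {x v : σ → R} {T : Set R} (hT : P.totalDegree < T.ncard)
    (hP : ∀ t ∈ T, eval (x + t • v) P = 0) :
    v ⬝ᵥ (fun i => eval x (pderiv i P)) = 0 := by
  have hfin : T.Finite := Set.finite_of_ncard_pos (by omega)
  have hzero : lineRestrict x v P = 0 :=
    Polynomial.eq_zero_of_natDegree_lt_card_of_eval_eq_zero' _ hfin.toFinset
      (fun t ht => (eval_lineRestrict x v P t).trans (hP t (hfin.mem_toFinset.mp ht)))
      ((natDegree_lineRestrict_le x v P).trans_lt (by rwa [← Set.ncard_eq_toFinset_card _ hfin]))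
  have := congrArg (Polynomial.eval 0 ∘ Polynomial.derivative) hzero
  simpa [derivative_lineRestrict, Polynomial.eval_finsetSum, eval_lineRestrict, dotProduct]
    using this

theorem totalDegree_pderiv_le (i : σ) (P : MvPolynomial σ R) :
    (pderiv i P).totalDegree ≤ P.totalDegree - 1 := by
  refine Finset.sup_le fun m hm => ?_
  have h : m + Finsupp.single i 1 ∈ P.support := by
    rw [mem_support_iff, coeff_pderiv] at hm
    exact mem_support_iff.mpr (left_ne_zero_of_mul hm)
  have := le_totalDegree h
  rw [Finsupp.sum_add_index' (by simp) (by simp), Finsupp.sum_single_index rfl] at this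
  omega

theorem totalDegree_eq_zero_of_forall_pderiv_eq_zero [NoZeroDivisors R] [CharZero R]
    {P : MvPolynomial σ R} (h : ∀ i, pderiv i P = 0) : P.totalDegree = 0 := by
  refine (totalDegree_eq_zero_iff σ P).mpr fun s hs i => ?_
  by_contra hsi
  obtain ⟨m, rfl⟩ : ∃ m, s = m + Finsupp.single i 1 :=
    ⟨s - Finsupp.single i 1,
      (tsub_add_cancel_of_le (Finsupp.single_le_iff.mpr (by omega))).symm⟩
  have := coeff_pderiv (i := i) P m
  rw [h i, coeff_zero, eq_comm, mul_eq_zero] at this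
  exact this.elim (mem_support_iff.mp hs) (Nat.cast_add_one_ne_zero _)

theorem exists_ne_zero_totalDegree_le_eval_eq_zero {K : Type*} [Field K] [Fintype σ]
    (S : Finset (σ → K)) {m : ℕ} (hS : S.card < m ^ Fintype.card σ) :
    ∃ P : MvPolynomial σ K, P ≠ 0 ∧ P.totalDegree ≤ Fintype.card σ * (m - 1) ∧
      ∀ x ∈ S, eval x P = 0 := by
  classical
  -- there are `m ^ card σ > |S|` monomials with all exponents `< m`, so as functions on `S`
  -- they are linearly dependent
  let e : (σ → Fin m) → σ →₀ ℕ := fun a =>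
    Finsupp.equivFunOnFinite.symm fun i => (a i : ℕ)
  have he : Function.Injective e := by
    intro a b hab
    funext i
    exact Fin.ext (by simpa [e] using DFunLike.congr_fun hab i)
  have hdep :
      ¬ LinearIndependent K fun a (x : S) => eval (x : σ → K) (monomial (e a) (1 : K)) :=
    fun hli => by
      have := hli.fintype_card_le_finrank
      simp [Module.finrank_fintype_fun_eq_card] at this
      omega
  obtain ⟨g, hg, a₀, ha₀⟩ := Fintype.not_linearIndependent_iff.mp hdep
  refine ⟨∑ a, g a • monomial (e a) 1, fun h0 => ha₀ ?_, ?_, fun x hx => ?_⟩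
  · exact Fintype.linearIndependent_iff.mp ((basisMonomials σ K).linearIndependent.comp e he) g
      (by simpa only [Function.comp_apply, coe_basisMonomials] using h0) a₀
  · refine (totalDegree_finsetSum _ _).trans (Finset.sup_le fun a _ => ?_)
    refine (totalDegree_smul_le _ _).trans <| (totalDegree_monomial_le _ _).trans ?_
    rw [Finsupp.sum_fintype _ _ (fun _ => rfl)]
    exact (Finset.sum_le_sum fun i _ => Nat.le_sub_one_of_lt (a i).isLt).trans_eq (by simp)
  · simpa [map_sum, smul_eval] using congr_fun hg ⟨x, hx⟩

end MvPolynomial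

theorem Matrix.eq_zero_of_forall_dotProduct_eq_zero {K σ : Type*} [Field K] [Fintype σ]
    {v : σ → σ → K} (hv : LinearIndependent K v) {c : σ → K} (h : ∀ i, v i ⬝ᵥ c = 0) :
    c = 0 := by
  classical
  exact Matrix.mulVec_injective_iff_isUnit.mpr (Matrix.linearIndependent_rows_iff_isUnit.mp hv)
    (funext fun i => by simpa [Matrix.mulVec] using h i)

theorem ncard_inter_line {K E : Type*} [Field K] [AddCommGroup E] [Module K E] (S : Set E)
    (p : E) {v : E} (hv : v ≠ 0) :
    (S ∩ {y | ∃ t : K, y = p + t • v}).ncard = {t : K | p + t • v ∈ S}.ncard := by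
  have : S ∩ {y | ∃ t : K, y = p + t • v} =
      (fun t : K => p + t • v) '' {t | p + t • v ∈ S} := by
    ext y
    constructor
    · rintro ⟨hyS, t, rfl⟩
      exact ⟨t, hyS, rfl⟩
    · rintro ⟨t, ht, rfl⟩
      exact ⟨ht, t, rfl⟩
  rw [this]
  exact Set.ncard_image_of_injective _ ((add_right_injective p).comp (smul_left_injective K hv))

theorem inter_line_subset_singleton {K E : Type*} [Field K] [AddCommGroup E] [Module K E]
    {a b : E} (hab : LinearIndependent K ![a, b]) (p : E) :
    {y | ∃ t : K, y = p + t • a} ∩ {y | ∃ t : K, y = p + t • b} ⊆ {p} := by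
  rintro y ⟨⟨s, rfl⟩, t, hst⟩
  have hs := (LinearIndependent.pair_iff.mp hab s (-t) (by
    rw [neg_smul, ← sub_eq_add_neg, sub_eq_zero]
    exact add_left_cancel hst)).1
  simp [hs]

open MvPolynomial

variable {n : ℕ} {L : Set (Set (EuclideanSpace ℝ (Fin n)))}

theorem IsJoint.mono {L' : Set (Set (EuclideanSpace ℝ (Fin n)))} (hLL' : L ⊆ L')
    {p : EuclideanSpace ℝ (Fin n)} (hp : IsJoint L p) : IsJoint L' p :=
  let ⟨v, hv, hmem⟩ := hp
  ⟨v, hv, fun i => hLL' (hmem i)⟩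

theorem IsJoint.diff_singleton {p : EuclideanSpace ℝ (Fin n)} (hp : IsJoint L p)
    {l : Set (EuclideanSpace ℝ (Fin n))} (hpl : p ∉ l) : IsJoint (L \ {l}) p := by
  obtain ⟨v, hv, hmem⟩ := hp
  refine ⟨v, hv, fun i => ⟨hmem i, fun hl => hpl ?_⟩⟩
  rw [← Set.mem_singleton_iff.mp hl]
  exact ⟨0, by simp⟩

theorem finite_setOf_isJoint (hn : 2 ≤ n) (hL : L.Finite) : {p | IsJoint L p}.Finite := by
  let pairs := {q ∈ L ×ˢ L | (q.1 ∩ q.2).Subsingleton}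
  have hpairs : pairs.Finite := (hL.prod hL).subset fun q hq => hq.1
  refine (hpairs.biUnion fun q hq => hq.2.finite).subset fun p ⟨v, hv, hmem⟩ => ?_
  let i₀ : Fin n := ⟨0, by omega⟩
  let i₁ : Fin n := ⟨1, by omega⟩
  have hpair : LinearIndependent ℝ ![v i₀, v i₁] := LinearIndependent.pair_iff.mpr <|
    (LinearIndepOn.pair_iff v (by simp [i₀, i₁, Fin.ext_iff])).mp (hv.linearIndepOn _)
  exact Set.mem_biUnion (x := (_, _)) ⟨⟨hmem i₀, hmem i₁⟩,
    Set.subsingleton_singleton.anti (inter_line_subset_singleton hpair p)⟩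
    ⟨⟨0, by simp⟩, ⟨0, by simp⟩⟩

theorem eval_pderiv_eq_zero_of_isJoint {P : MvPolynomial (Fin n) ℝ}
    (hrich : ∀ l ∈ L, P.totalDegree < ({q | IsJoint L q} ∩ l).ncard)
    (hP : ∀ q, IsJoint L q → eval ⇑q P = 0) {p : EuclideanSpace ℝ (Fin n)}
    (hp : IsJoint L p) (i : Fin n) : eval ⇑p (pderiv i P) = 0 := by
  obtain ⟨v, hv, hmem⟩ := hp
  have hv' : LinearIndependent ℝ fun k => ⇑(v k) :=
    hv.map' (WithLp.linearEquiv 2 ℝ (Fin n → ℝ)).toLinearMap (LinearEquiv.ker _)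
  refine congr_fun (Matrix.eq_zero_of_forall_dotProduct_eq_zero hv'
    (c := fun j => eval ⇑p (pderiv j P)) fun k => ?_) i
  refine dotProduct_eval_pderiv_eq_zero (T := {t | IsJoint L (p + t • v k)}) ?_ fun t ht => ?_
  · exact (ncard_inter_line (K := ℝ) {q | IsJoint L q} p (hv.ne_zero k)) ▸ hrich _ (hmem k)
  · simpa using hP _ ht

theorem eq_zero_of_eval_eq_zero_on_joints (hJ : ∃ p, IsJoint L p) {d : ℕ}
    (hrich : ∀ l ∈ L, d < ({q | IsJoint L q} ∩ l).ncard) {P : MvPolynomial (Fin n) ℝ}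
    (hd : P.totalDegree ≤ d) (hP : ∀ q, IsJoint L q → eval ⇑q P = 0) : P = 0 := by
  induction hk : P.totalDegree using Nat.strong_induction_on generalizing P with
  | _ k ih =>
    have hgrad : ∀ q, IsJoint L q → ∀ i, eval ⇑q (pderiv i P) = 0 := fun q hq =>
      eval_pderiv_eq_zero_of_isJoint (fun l hl => hd.trans_lt (hrich l hl)) hP hq
    have hconst : P.totalDegree = 0 := by
      by_contra hpos
      refine hpos (totalDegree_eq_zero_of_forall_pderiv_eq_zero fun i => ?_)
      have hdeg := totalDegree_pderiv_le i P
      exact ih _ (by omega) (by omega) (fun q hq => hgrad q hq i) rfl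
    obtain ⟨p, hp⟩ := hJ
    rw [totalDegree_eq_zero_iff_eq_C.mp hconst] at hP ⊢
    simpa using hP p hp

theorem exists_mem_ncard_inter_le (hJ : {p | IsJoint L p}.Finite)
    (hJne : {p | IsJoint L p}.Nonempty) {m : ℕ} (hm : {p | IsJoint L p}.ncard < m ^ n) :
    ∃ l ∈ L, ({p | IsJoint L p} ∩ l).ncard ≤ n * (m - 1) := by
  classical
  by_contra! hrich
  have hcard : (hJ.toFinset.image (⇑)).card < m ^ Fintype.card (Fin n) :=
    Finset.card_image_le.trans_lt (by rwa [Fintype.card_fin, ← Set.ncard_eq_toFinset_card _ hJ])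
  obtain ⟨P, hP0, hPdeg, hPJ⟩ := exists_ne_zero_totalDegree_le_eval_eq_zero _ hcard
  rw [Fintype.card_fin] at hPdeg
  exact hP0 (eq_zero_of_eval_eq_zero_on_joints hJne hrich hPdeg fun q hq =>
    hPJ _ (Finset.mem_image_of_mem _ (hJ.mem_toFinset.mpr hq)))

theorem ncard_setOf_isJoint_le (hn : 2 ≤ n) (hL : L.Finite) {m : ℕ}
    (hm : {p | IsJoint L p}.ncard < m ^ n) :
    {p | IsJoint L p}.ncard ≤ n * (m - 1) * L.ncard := by
  induction hk : L.ncard using Nat.strong_induction_on generalizing L with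
  | _ k ih =>
    have hJ := finite_setOf_isJoint hn hL
    rcases Set.eq_empty_or_nonempty {p | IsJoint L p} with hJ0 | hJne
    · simp [hJ0]
    obtain ⟨l, hl, hfew⟩ := exists_mem_ncard_inter_le hJ hJne hm
    have hsplit : {p | IsJoint L p} ⊆ {p | IsJoint (L \ {l}) p} ∪ ({p | IsJoint L p} ∩ l) :=
      fun p hp => (em (p ∈ l)).elim (fun hpl => Or.inr ⟨hp, hpl⟩)
        fun hpl => Or.inl (hp.diff_singleton hpl)
    have hmono : {p | IsJoint (L \ {l}) p} ⊆ {p | IsJoint L p} :=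
      fun p hp => hp.mono Set.sdiff_subset
    have hk0 : 0 < k := hk ▸ (Set.ncard_pos hL).mpr ⟨l, hl⟩
    have hrest := ih (k - 1) (by omega) hL.sdiff
      ((Set.ncard_le_ncard hmono hJ).trans_lt hm) (by rw [Set.ncard_sdiff_singleton_of_mem hl, hk])
    calc {p | IsJoint L p}.ncard
        ≤ {p | IsJoint (L \ {l}) p}.ncard + ({p | IsJoint L p} ∩ l).ncard :=
          (Set.ncard_le_ncard hsplit ((hJ.subset hmono).union (hJ.inter_of_left l))).trans
            (Set.ncard_union_le _ _)
      _ ≤ n * (m - 1) * (k - 1) + n * (m - 1) := add_le_add hrest hfew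
      _ = n * (m - 1) * k := by rw [← Nat.mul_succ, Nat.succ_eq_add_one, Nat.sub_add_cancel hk0]

theorem le_rpow_of_le_mul_rpow {x a r : ℝ} (hx : 0 ≤ x) (ha : 0 ≤ a) (hr : r < 1)
    (h : x ≤ a * x ^ r) : x ≤ a ^ (1 - r)⁻¹ := by
  have hr' : 0 < 1 - r := by linarith
  rcases hx.eq_or_lt with rfl | hx
  · positivity
  have hxa : x ^ (1 - r) ≤ a := by
    rwa [Real.rpow_sub hx, Real.rpow_one, div_le_iff₀ (by positivity)]
  calc x = (x ^ (1 - r)) ^ (1 - r)⁻¹ := by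
        rw [← Real.rpow_mul hx.le, mul_inv_cancel₀ hr'.ne', Real.rpow_one]
    _ ≤ a ^ (1 - r)⁻¹ := Real.rpow_le_rpow (by positivity) hxa (by positivity)

/-- The joints theorem: a finite set `L` of lines in `ℝ^n` determines at most
`C_n · |L|^{n/(n-1)}` joints. -/
theorem joints_theorem (n : ℕ) (hn : 2 ≤ n) :
    ∃ C : ℝ, 0 < C ∧
      ∀ L : Set (Set (EuclideanSpace ℝ (Fin n))), L.Finite →
        (∀ l ∈ L, IsLine' l) →
        ({p | IsJoint L p}.ncard : ℝ) ≤ C * (L.ncard : ℝ) ^ ((n : ℝ) / ((n : ℝ) - 1)) := by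
  have hn0 : n ≠ 0 := by omega
  have hn1 : (1 : ℝ) < n := by exact_mod_cast hn
  refine ⟨(n : ℝ) ^ ((n : ℝ) / ((n : ℝ) - 1)), by positivity, fun L hL _ => ?_⟩
  set N := {p | IsJoint L p}.ncard
  have hcount : N ≤ n * Nat.nthRoot n N * L.ncard := by
    simpa using ncard_setOf_isJoint_le hn hL (Nat.lt_pow_nthRoot_add_one hn0 N)
  have hroot : (Nat.nthRoot n N : ℝ) ≤ (N : ℝ) ^ (n : ℝ)⁻¹ := by
    rw [Real.le_rpow_inv_iff_of_pos (by positivity) (by positivity) (by positivity),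
      Real.rpow_natCast]
    exact_mod_cast Nat.pow_nthRoot_le_iff.mpr (Or.inl hn0)
  have hself : (N : ℝ) ≤ (n * L.ncard) * (N : ℝ) ^ (n : ℝ)⁻¹ :=
    calc (N : ℝ) ≤ n * Nat.nthRoot n N * L.ncard := by exact_mod_cast hcount
      _ ≤ n * (N : ℝ) ^ (n : ℝ)⁻¹ * L.ncard := by gcongr
      _ = _ := by ring
  have hexp : (1 - (n : ℝ)⁻¹)⁻¹ = (n : ℝ) / ((n : ℝ) - 1) := by
    field_simp
  calc (N : ℝ) ≤ (n * L.ncard) ^ (1 - (n : ℝ)⁻¹)⁻¹ :=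
        le_rpow_of_le_mul_rpow (by positivity) (by positivity) (inv_lt_one_of_one_lt₀ hn1) hself
    _ = _ := by rw [hexp, Real.mul_rpow (by positivity) (by positivity)]
end

section
/- For every integer k ≥ 2 there exists a constant C_k > 0 such that for every positive integer d, every nonzero polynomial Q in k real variables of total degree at most d, every unit vector v ∈ ℝ^k, and every R > 0, one has ∫⁻_{y} #{t ∈ ℝ : Q(y + t•v) = 0} dμ(y) ≤ C_k·R^{k-1}·d, where the lower integral is taken over {y ∈ v^⊥ : ‖y‖ ≤ R} with respect to the (k−1)-dimensional Hausdorff measure μ on the hyperplane v^⊥ = {y ∈ ℝ^k : ⟨y, v⟩ = 0}, and #{t ∈ ℝ : Q(y + t•v) = 0} denotes the cardinality (in ℕ ∪ {∞}) of the zero set of Q along the line through y in direction v. -/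
/-!
For `y ⟂ v` off a bad set, `t ↦ Q (y + t • v)` is a nonzero polynomial of degree at most `d`, hence
has at most `d` zeros, so the integral is at most `d` times the `(k-1)`-dimensional Hausdorff
measure of the disc, which is `R ^ (k-1)` times that of the unit disc of `ℝ^(k-1)`. The bad set,
where `Q` vanishes on the whole line, is null: under the splitting `ℝ^k ≃ v^⊥ × ℝ v` the union of
its lines is the bad set times a line, and it lies in the zero set of `Q`, which is Lebesgue-null
by Fubini and induction on the number of variables.
-/

open MeasureTheory ENNReal RealInnerProductSpace Metric Module

namespace Polynomial

theorem encard_setOf_eval_eq_zero_le {R : Type*} [CommRing R] [IsDomain R] {p : R[X]} (hp : p ≠ 0) :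
    {t : R | p.eval t = 0}.encard ≤ p.natDegree := by
  classical
  have : {t : R | p.eval t = 0} = ↑p.roots.toFinset := by
    ext t
    simp [hp]
  rw [this, Set.encard_coe_eq_coe_finsetCard]
  exact_mod_cast (Multiset.toFinset_card_le _).trans p.card_roots'

end Polynomial

namespace MvPolynomial

variable {R σ : Type*} [CommRing R]

theorem natDegree_aeval_le_totalDegree {f : σ → Polynomial R} (hf : ∀ i, (f i).natDegree ≤ 1)
    (Q : MvPolynomial σ R) : (aeval f Q).natDegree ≤ Q.totalDegree := by
  rw [aeval_def, eval₂_eq]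
  refine Polynomial.natDegree_sum_le_of_forall_le _ _ fun m hm => ?_
  refine Polynomial.natDegree_mul_le.trans ?_
  rw [Polynomial.algebraMap_eq, Polynomial.natDegree_C, zero_add]
  refine (Polynomial.natDegree_prod_le _ _).trans ?_
  calc ∑ i ∈ m.support, ((f i) ^ m i).natDegree
      ≤ ∑ i ∈ m.support, m i * 1 :=
        Finset.sum_le_sum fun i _ =>
          Polynomial.natDegree_pow_le.trans (Nat.mul_le_mul_left _ (hf i))
    _ = m.sum fun _ e => e := by simp [Finsupp.sum]
    _ ≤ Q.totalDegree := le_totalDegree hm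

noncomputable def restrictLine (Q : MvPolynomial σ R) (y v : σ → R) : Polynomial R :=
  aeval (fun i => Polynomial.C (y i) + Polynomial.C (v i) * Polynomial.X) Q

theorem eval_restrictLine (Q : MvPolynomial σ R) (y v : σ → R) (t : R) :
    (Q.restrictLine y v).eval t = eval (y + t • v) Q := by
  rw [restrictLine, ← Polynomial.coe_aeval_eq_eval, comp_aeval_apply]
  have hpoint : (fun i => Polynomial.aeval t
      (Polynomial.C (y i) + Polynomial.C (v i) * Polynomial.X)) = y + t • v := by
    ext i
    simp only [map_add, map_mul, Polynomial.aeval_C, Polynomial.aeval_X, Pi.add_apply,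
      Pi.smul_apply, smul_eq_mul, Algebra.algebraMap_self, RingHom.id_apply]
    ring
  rw [hpoint]
  rfl

theorem encard_setOf_eval_line_le [IsDomain R] (Q : MvPolynomial σ R)
    {y v : σ → R} (h : ∃ t : R, eval (y + t • v) Q ≠ 0) :
    {t : R | eval (y + t • v) Q = 0}.encard ≤ Q.totalDegree := by
  have hline : Q.restrictLine y v ≠ 0 := by
    obtain ⟨t, ht⟩ := h
    intro h0
    simp [← eval_restrictLine, h0] at ht
  simp_rw [← eval_restrictLine]
  refine (Polynomial.encard_setOf_eval_eq_zero_le hline).trans ?_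
  refine Nat.cast_le.2 (natDegree_aeval_le_totalDegree (fun i => ?_) Q)
  compute_degree!

theorem volume_setOf_eval_eq_zero :
    ∀ {n : ℕ} {P : MvPolynomial (Fin n) ℝ}, P ≠ 0 → volume {x | eval x P = 0} = 0
  | 0, P, hP => by
    obtain ⟨c, rfl⟩ := C_surjective (Fin 0) P
    have hc : c ≠ 0 := by simpa using hP
    simp [hc]
  | n + 1, P, hP => by
    set p := finSuccEquiv ℝ n P
    have hp : p ≠ 0 := (EmbeddingLike.map_ne_zero_iff).2 hP
    have hlead : volume {x | eval x p.leadingCoeff = 0} = 0 :=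
      volume_setOf_eval_eq_zero (Polynomial.leadingCoeff_ne_zero.2 hp)
    have hslice : ∀ x : Fin n → ℝ, eval x p.leadingCoeff ≠ 0 →
        volume {t : ℝ | eval (Fin.cons t x) P = 0} = 0 := by
      intro x hx
      have hpx : p.map (eval x) ≠ 0 := by
        intro h
        apply hx
        simpa [Polynomial.coeff_map] using congrArg (Polynomial.coeff · p.natDegree) h
      simp_rw [eval_eq_eval_mv_eval']
      exact (Polynomial.finite_setOfPred_isRoot hpx).measure_zero volume
    have hZ : MeasurableSet {x : Fin (n + 1) → ℝ | eval x P = 0} :=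
      (isClosed_eq (continuous_eval P) continuous_const).measurableSet
    have hcons := (volume_preserving_piFinSuccAbove (fun _ : Fin (n + 1) => ℝ) 0).symm
    rw [← hcons.measure_preimage hZ.nullMeasurableSet, Measure.volume_eq_prod,
      Measure.prod_apply_symm (hcons.measurable hZ)]
    refine lintegral_eq_zero_of_ae_eq_zero ?_
    filter_upwards [measure_eq_zero_iff_ae_notMem.1 hlead] with x hx
    simpa [MeasurableEquiv.piFinSuccAbove, Fin.insertNthEquiv] using hslice x hx

theorem volume_setOf_eval_ofLp_eq_zero {n : ℕ} {P : MvPolynomial (Fin n) ℝ} (hP : P ≠ 0) :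
    volume {x : EuclideanSpace ℝ (Fin n) | eval x.ofLp P = 0} = 0 :=
  ((PiLp.volume_preserving_ofLp _).measure_preimage
      (isClosed_eq (continuous_eval P) continuous_const).measurableSet.nullMeasurableSet).trans
    (volume_setOf_eval_eq_zero hP)

end MvPolynomial

section InnerProductSpace

variable {E : Type*} [NormedAddCommGroup E] [InnerProductSpace ℝ E]

theorem setOf_inner_eq_zero_and_eq_image (v : E) (p : E → Prop) :
    {y : E | ⟪y, v⟫ = 0 ∧ p y} = Subtype.val '' {w : (ℝ ∙ v)ᗮ | p w} := by
  ext y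
  simp [Submodule.mem_orthogonal_singleton_iff_inner_left, and_comm]

variable {n : ℕ} {v : E}

theorem finrank_orthogonal_span_singleton_of_finrank_eq (hv : v ≠ 0) (hn : finrank ℝ E = n + 1) :
    finrank ℝ (ℝ ∙ v)ᗮ = n := by
  have : Fact (finrank ℝ E = n + 1) := ⟨hn⟩
  exact Submodule.finrank_orthogonal_span_singleton hv

variable [FiniteDimensional ℝ E] [MeasurableSpace E] [BorelSpace E]

theorem Submodule.volume_setOf_forall_add_mem_eq_zero (W : Submodule ℝ E) [Nontrivial Wᗮ]
    {Z : Set E} (hZ : volume Z = 0) : volume {w : W | ∀ u : Wᗮ, (w : E) + u ∈ Z} = 0 := by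
  set B := {w : W | ∀ u : Wᗮ, (w : E) + u ∈ Z}
  have hsplit := (W.measurePreserving_measurableEquivProd (0 : E)).symm
  rw [InnerProductSpace.euclideanHausdorffMeasure_eq_volume] at hsplit
  have hprod : B ×ˢ Set.univ ⊆ (W.measurableEquivProd (0 : E)).symm ⁻¹' Z := by
    rintro ⟨w, u⟩ ⟨hw, -⟩
    simpa using hw u
  have hle := (measure_mono hprod).trans_eq (hsplit.measure_preimage_equiv Z)
  rw [hZ, Measure.volume_eq_prod, Measure.prod_prod, measure_univ_of_isAddLeftInvariant] at hle
  simpa using hle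

theorem hausdorffMeasure_closedBall_of_finrank_eq (hn : finrank ℝ E = n) (x : E) {r : ℝ}
    (hr : 0 ≤ r) :
    μH[n] (closedBall x r) =
      ENNReal.ofReal (r ^ n) * μH[n] (closedBall (0 : EuclideanSpace ℝ (Fin n)) 1) := by
  subst hn
  let e := (stdOrthonormalBasis ℝ E).repr
  rw [Measure.addHaar_closedBall' _ x hr, ← map_zero e, ← e.image_closedBall,
    e.isometry.hausdorffMeasure_image (Or.inr e.surjective)]

theorem hausdorffMeasure_setOf_inner_eq_zero_and_forall_mem_eq_zero (hv : v ≠ 0)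
    (hn : finrank ℝ E = n + 1) {Z : Set E} (hZ : volume Z = 0) :
    μH[n] {y : E | ⟪y, v⟫ = 0 ∧ ∀ t : ℝ, y + t • v ∈ Z} = 0 := by
  set W := (ℝ ∙ v)ᗮ
  have hWperp : Wᗮ = ℝ ∙ v := Submodule.orthogonal_orthogonal _
  have : Nontrivial Wᗮ :=
    nontrivial_of_ne ⟨v, hWperp ▸ Submodule.mem_span_singleton_self v⟩ 0 (by simpa using hv)
  have hbad : {w : W | ∀ t : ℝ, (w : E) + t • v ∈ Z} ⊆ {w : W | ∀ u : Wᗮ, (w : E) + u ∈ Z} := by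
    rintro w hw ⟨u, hu⟩
    obtain ⟨t, rfl⟩ := Submodule.mem_span_singleton.1 (hWperp ▸ hu)
    exact hw t
  rw [setOf_inner_eq_zero_and_eq_image,
    isometry_subtype_coe.hausdorffMeasure_image (Or.inl n.cast_nonneg),
    ← finrank_orthogonal_span_singleton_of_finrank_eq hv hn]
  exact Measure.absolutelyContinuous_isAddHaarMeasure _ volume
    (measure_mono_null hbad (W.volume_setOf_forall_add_mem_eq_zero hZ))

theorem hausdorffMeasure_setOf_inner_eq_zero_and_norm_le (hv : v ≠ 0)
    (hn : finrank ℝ E = n + 1) {R : ℝ} (hR : 0 ≤ R) :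
    μH[n] {y : E | ⟪y, v⟫ = 0 ∧ ‖y‖ ≤ R} =
      ENNReal.ofReal (R ^ n) * μH[n] (closedBall (0 : EuclideanSpace ℝ (Fin n)) 1) := by
  rw [setOf_inner_eq_zero_and_eq_image,
    isometry_subtype_coe.hausdorffMeasure_image (Or.inl n.cast_nonneg)]
  convert hausdorffMeasure_closedBall_of_finrank_eq
    (finrank_orthogonal_span_singleton_of_finrank_eq hv hn) 0 hR using 2
  ext
  simp

end InnerProductSpace

theorem lintegral_encard_setOf_eval_line_le {n : ℕ} {Q : MvPolynomial (Fin (n + 1)) ℝ} (hQ : Q ≠ 0)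
    {v : EuclideanSpace ℝ (Fin (n + 1))} (hv : v ≠ 0) {S : Set (EuclideanSpace ℝ (Fin (n + 1)))}
    (hS : MeasurableSet S) (hSv : ∀ y ∈ S, ⟪y, v⟫ = 0) :
    ∫⁻ y in S, ({t : ℝ | MvPolynomial.eval (y + t • v).ofLp Q = 0}.encard : ℝ≥0∞) ∂μH[n] ≤
      Q.totalDegree * μH[n] S := by
  have hgood := measure_eq_zero_iff_ae_notMem.1
    (hausdorffMeasure_setOf_inner_eq_zero_and_forall_mem_eq_zero hv finrank_euclideanSpace_fin
      (MvPolynomial.volume_setOf_eval_ofLp_eq_zero hQ))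
  have hcount : ∀ᵐ y ∂μH[n].restrict S,
      ({t : ℝ | MvPolynomial.eval (y + t • v).ofLp Q = 0}.encard : ℝ≥0∞) ≤ Q.totalDegree := by
    refine (ae_restrict_iff' hS).2 ?_
    filter_upwards [hgood] with y hy hyS
    have hline : ∃ t : ℝ, MvPolynomial.eval (y.ofLp + t • v.ofLp) Q ≠ 0 := by
      simpa [hSv y hyS] using hy
    exact ENat.toENNReal_le.2 (Q.encard_setOf_eval_line_le hline)
  exact (lintegral_mono_ae hcount).trans_eq (setLIntegral_const _ _)

theorem cylinder_estimate_general (k : ℕ) :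
    ∃ C : ℝ, 0 < C ∧
      ∀ d : ℕ, 0 < d →
        ∀ Q : MvPolynomial (Fin k) ℝ, Q ≠ 0 → Q.totalDegree ≤ d →
          ∀ v : EuclideanSpace ℝ (Fin k), ‖v‖ = 1 →
            ∀ R : ℝ, 0 < R →
              (∫⁻ y in {y : EuclideanSpace ℝ (Fin k) | ⟪y, v⟫ = 0 ∧ ‖y‖ ≤ R},
                  (({t : ℝ | MvPolynomial.eval (fun i => (y + t • v) i) Q = 0}.encard :
                    ℕ∞) : ℝ≥0∞)
                  ∂(MeasureTheory.Measure.hausdorffMeasure ((k : ℝ) - 1)))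
                ≤ ENNReal.ofReal (C * R ^ (k - 1) * d) := by
  obtain _ | n := k
  · refine ⟨1, one_pos, fun d _ Q _ _ v hv => ?_⟩
    simp [Subsingleton.elim v 0] at hv
  set C := (μH[n] (closedBall (0 : EuclideanSpace ℝ (Fin n)) 1)).toReal
  refine ⟨C, ENNReal.toReal_pos (measure_closedBall_pos _ _ one_pos).ne'
    measure_closedBall_lt_top.ne, fun d _ Q hQ hQd v hv R hR => ?_⟩
  have hv0 : v ≠ 0 := by rintro rfl; simp at hv
  have hexp : ((n + 1 : ℕ) : ℝ) - 1 = n := by push_cast; ring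
  rw [hexp, Nat.add_sub_cancel]
  calc _ ≤ Q.totalDegree * μH[n] {y : EuclideanSpace ℝ (Fin (n + 1)) | ⟪y, v⟫ = 0 ∧ ‖y‖ ≤ R} :=
        lintegral_encard_setOf_eval_line_le hQ hv0 (by measurability) fun y hy => hy.1
    _ ≤ d * (ENNReal.ofReal (R ^ n) * ENNReal.ofReal C) := by
      rw [hausdorffMeasure_setOf_inner_eq_zero_and_norm_le hv0 finrank_euclideanSpace_fin hR.le,
        ENNReal.ofReal_toReal measure_closedBall_lt_top.ne]
      gcongr
    _ = ENNReal.ofReal (C * R ^ n * d) := by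
      rw [← ENNReal.ofReal_natCast, ← ENNReal.ofReal_mul (by positivity),
        ← ENNReal.ofReal_mul (by positivity)]
      congr 1
      ring

/-- Cylinder estimate for the directed area of an algebraic hypersurface, in the
fiber-counting form: for a nonzero polynomial `Q` of degree at most `d` in `ℝ^k`, a
unit vector `v` and a radius `R`, the integral over the disc of radius `R` in the
hyperplane `v^⊥` (with respect to `(k-1)`-dimensional Hausdorff measure) of the number
of zeros of `Q` along the line in direction `v` is at most `C_k · R^{k-1} · d`. -/
theorem cylinder_estimate (k : ℕ) (hk : 2 ≤ k) :
    ∃ C : ℝ, 0 < C ∧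
      ∀ d : ℕ, 0 < d →
        ∀ Q : MvPolynomial (Fin k) ℝ, Q ≠ 0 → Q.totalDegree ≤ d →
          ∀ v : EuclideanSpace ℝ (Fin k), ‖v‖ = 1 →
            ∀ R : ℝ, 0 < R →
              (∫⁻ y in {y : EuclideanSpace ℝ (Fin k) | ⟪y, v⟫ = 0 ∧ ‖y‖ ≤ R},
                  (({t : ℝ | MvPolynomial.eval (fun i => (y + t • v) i) Q = 0}.encard :
                    ℕ∞) : ℝ≥0∞)
                  ∂(MeasureTheory.Measure.hausdorffMeasure ((k : ℝ) - 1)))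
                ≤ ENNReal.ofReal (C * R ^ (k - 1) * d) :=
  cylinder_estimate_general k
end
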